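/- arXiv:1810.12434 — 3 statements merged into one kernel-verified Lean document; each statement's English description precedes it below -/
import Mathlib

section
/- If u : ℝ × ℝ → ℝ is smooth and satisfies ∂²u/∂x∂y = u everywhere, then the function Ju defined by (Ju)(x,y) = x·(∂u/∂x)(x,y) - y·(∂u/∂y)(x,y) also satisfies ∂²(Ju)/∂x∂y = Ju everywhere. -/
noncomputable def pdx (f : ℝ × ℝ → ℝ) : ℝ × ℝ → ℝ := fun p => fderiv ℝ f p (1, 0)
noncomputable def pdy (f : ℝ × ℝ → ℝ) : ℝ × ℝ → ℝ := fun p => fderiv ℝ f p (0, 1)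
noncomputable def J (f : ℝ × ℝ → ℝ) : ℝ × ℝ → ℝ :=
  fun p => p.1 * pdx f p - p.2 * pdy f p

private lemma pd_smooth {f : ℝ × ℝ → ℝ} (hf : ContDiff ℝ (⊤ : ℕ∞) f) (v : ℝ × ℝ) :
    ContDiff ℝ (⊤ : ℕ∞) (fun p => fderiv ℝ f p v) :=
  (hf.fderiv_right (by simp)).clm_apply contDiff_const

private lemma pd_swap {f : ℝ × ℝ → ℝ} (hf : ContDiff ℝ (⊤ : ℕ∞) f) (v w p : ℝ × ℝ) :
    fderiv ℝ (fun q => fderiv ℝ f q v) p w = fderiv ℝ (fun q => fderiv ℝ f q w) p v := by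
  have hdf : Differentiable ℝ (fderiv ℝ f) :=
    (hf.fderiv_right (m := (⊤ : ℕ∞)) (by simp)).differentiable (by simp)
  have h1 : fderiv ℝ (fun q => fderiv ℝ f q v) p
      = (fderiv ℝ (fderiv ℝ f) p).flip v := by
    rw [fderiv_clm_apply (hdf p) (differentiableAt_const v)]
    simp
  have h2 : fderiv ℝ (fun q => fderiv ℝ f q w) p
      = (fderiv ℝ (fderiv ℝ f) p).flip w := by
    rw [fderiv_clm_apply (hdf p) (differentiableAt_const w)]
    simp
  rw [h1, h2]
  simp only [ContinuousLinearMap.flip_apply]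
  exact second_derivative_symmetric (f := f) (f' := fderiv ℝ f)
    (fun y => (hf.differentiable (by simp) y).hasFDerivAt) (hdf p).hasFDerivAt w v

private lemma fderiv_comb (a b : ℝ × ℝ → ℝ) (ha : Differentiable ℝ a)
    (hb : Differentiable ℝ b) (p v : ℝ × ℝ) :
    fderiv ℝ (fun q => q.1 * a q - q.2 * b q) p v
      = (v.1 * a p + p.1 * fderiv ℝ a p v) - (v.2 * b p + p.2 * fderiv ℝ b p v) := by
  have h1 : DifferentiableAt ℝ (fun q : ℝ × ℝ => q.1 * a q) p :=
    differentiableAt_fst.mul (ha p)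
  have h2 : DifferentiableAt ℝ (fun q : ℝ × ℝ => q.2 * b q) p :=
    differentiableAt_snd.mul (hb p)
  rw [fderiv_fun_sub h1 h2]
  simp only [ContinuousLinearMap.sub_apply]
  rw [fderiv_fun_mul differentiableAt_fst (ha p), fderiv_fun_mul differentiableAt_snd (hb p)]
  simp [fderiv_fst, fderiv_snd]
  ring

theorem stmt2 (u : ℝ × ℝ → ℝ) (hu : ContDiff ℝ (⊤ : ℕ∞) u)
    (heq : ∀ p, pdy (pdx u) p = u p) :
    ∀ p, pdy (pdx (J u)) p = J u p := by
  intro p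
  have hux : ContDiff ℝ (⊤ : ℕ∞) (pdx u) := pd_smooth hu _
  have huy : ContDiff ℝ (⊤ : ℕ∞) (pdy u) := pd_smooth hu _
  have huxx : ContDiff ℝ (⊤ : ℕ∞) (pdx (pdx u)) := pd_smooth hux _
  have huxy : ContDiff ℝ (⊤ : ℕ∞) (pdx (pdy u)) := pd_smooth huy _
  -- Step 1 : explicit formula for pdx (J u)
  have step1 : pdx (J u) = fun q => pdx u q + (q.1 * pdx (pdx u) q - q.2 * pdx (pdy u) q) := by
    funext q
    show fderiv ℝ (fun r => r.1 * pdx u r - r.2 * pdy u r) q (1, 0) = _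
    rw [fderiv_comb (pdx u) (pdy u) (hux.differentiable (by simp)) (huy.differentiable (by simp))]
    show (1 * pdx u q + q.1 * pdx (pdx u) q) - (0 * pdy u q + q.2 * pdx (pdy u) q) = _
    ring
  -- key identities
  have key1 : ∀ q, pdx (pdy u) q = u q := by
    intro q
    have := pd_swap hu (0, 1) (1, 0) q
    rw [show (fun r => fderiv ℝ u r (0,1)) = pdy u from rfl,
        show (fun r => fderiv ℝ u r (1,0)) = pdx u from rfl] at this
    exact this.trans (heq q)
  have hxyu : pdx (pdy u) = u := funext key1
  have hyxu : pdy (pdx u) = u := funext heq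
  have key2 : ∀ q, pdy (pdx (pdx u)) q = pdx u q := by
    intro q
    have := pd_swap hux (1, 0) (0, 1) q
    rw [show (fun r => fderiv ℝ (pdx u) r (1,0)) = pdx (pdx u) from rfl,
        show (fun r => fderiv ℝ (pdx u) r (0,1)) = pdy (pdx u) from rfl] at this
    show pdy (pdx (pdx u)) q = _
    rw [show pdy (pdx (pdx u)) q = fderiv ℝ (pdx (pdx u)) q (0,1) from rfl, this, hyxu]
    rfl
  have key3 : ∀ q, pdy (pdx (pdy u)) q = pdy u q := by
    intro q
    rw [show pdx (pdy u) = u from hxyu]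
  -- Step 2 : differentiate step1 in y
  have hsum : pdy (pdx (J u)) p
      = pdy (pdx u) p
        + fderiv ℝ (fun q => q.1 * pdx (pdx u) q - q.2 * pdx (pdy u) q) p (0, 1) := by
    rw [step1]
    show fderiv ℝ (fun q => pdx u q + (q.1 * pdx (pdx u) q - q.2 * pdx (pdy u) q)) p (0,1) = _
    have hA : DifferentiableAt ℝ (pdx u) p := (hux.differentiable (by simp)) p
    have hB : DifferentiableAt ℝ (fun q : ℝ × ℝ => q.1 * pdx (pdx u) q - q.2 * pdx (pdy u) q) p := by
      exact ((differentiableAt_fst.mul ((huxx.differentiable (by simp)) p)).sub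
        (differentiableAt_snd.mul ((huxy.differentiable (by simp)) p)))
    rw [fderiv_fun_add hA hB]
    rfl
  rw [hsum, fderiv_comb _ _ (huxx.differentiable (by simp)) (huxy.differentiable (by simp))]
  have e1 : fderiv ℝ (pdx (pdx u)) p (0, 1) = pdy (pdx (pdx u)) p := rfl
  have e2 : fderiv ℝ (pdx (pdy u)) p (0, 1) = pdy (pdx (pdy u)) p := rfl
  rw [e1, e2, heq p, key2 p, key3 p, key1 p]
  show u p + ((0 * _ + p.1 * pdx u p) - (1 * u p + p.2 * pdy u p)) = J u p
  show _ = p.1 * pdx u p - p.2 * pdy u p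
  ring
end

section
/- If v : ℝ × ℝ → ℝ is smooth and satisfies v_xy = v, then ∂x(-y·v_y² - x·v²) + ∂y(x·v_x² + y·v²) = 0 everywhere, i.e., (-y v_y² - x v², x v_x² + y v²) is a conserved current of the light-cone Klein–Gordon equation. -/
theorem stmt11 (v : ℝ × ℝ → ℝ) (hv : ContDiff ℝ (⊤ : ℕ∞) v)
    (heq : ∀ p, pdy (pdx v) p = v p) :
    ∀ p : ℝ × ℝ,
      pdx (fun q => -q.2 * (pdy v q) ^ 2 - q.1 * (v q) ^ 2) p +
        pdy (fun q => q.1 * (pdx v q) ^ 2 + q.2 * (v q) ^ 2) p = 0 := by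
  intro p
  have hv1 : ContDiff ℝ (⊤ : ℕ∞) (fderiv ℝ v) := hv.fderiv_right (by simp)
  set D := fderiv ℝ (fderiv ℝ v) p with hDdef
  have hv0 : HasFDerivAt v (fderiv ℝ v p) p := (hv.differentiable (by simp) p).hasFDerivAt
  have hDp : HasFDerivAt (fderiv ℝ v) D p := (hv1.differentiable (by simp) p).hasFDerivAt
  have hsymm : ∀ a b : ℝ × ℝ, D a b = D b a := fun a b =>
    second_derivative_symmetric (fun y => (hv.differentiable (by simp) y).hasFDerivAt) hDp a b
  -- derivatives of pdx v and pdy v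
  have hpdx : HasFDerivAt (pdx v)
      ((ContinuousLinearMap.apply ℝ ℝ ((1:ℝ),(0:ℝ))).comp D) p :=
    (ContinuousLinearMap.apply ℝ ℝ ((1:ℝ),(0:ℝ))).hasFDerivAt.comp p hDp
  have hpdy : HasFDerivAt (pdy v)
      ((ContinuousLinearMap.apply ℝ ℝ ((0:ℝ),(1:ℝ))).comp D) p :=
    (ContinuousLinearMap.apply ℝ ℝ ((0:ℝ),(1:ℝ))).hasFDerivAt.comp p hDp
  have hfst : HasFDerivAt (fun q : ℝ × ℝ => q.1) (ContinuousLinearMap.fst ℝ ℝ ℝ) p :=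
    (ContinuousLinearMap.fst ℝ ℝ ℝ).hasFDerivAt
  have hsnd : HasFDerivAt (fun q : ℝ × ℝ => q.2) (ContinuousLinearMap.snd ℝ ℝ ℝ) p :=
    (ContinuousLinearMap.snd ℝ ℝ ℝ).hasFDerivAt
  -- mixed partials
  have hmixed : D (0,1) (1,0) = v p := by
    have h1 : pdy (pdx v) p = D (0,1) (1,0) := by
      rw [pdy, hpdx.fderiv]; rfl
    rw [← heq p, h1]
  have hmixed' : D (1,0) (0,1) = v p := by rw [hsymm]; exact hmixed
  -- derivative of first expression
  have hF1 := (hsnd.neg.mul (hpdy.mul hpdy)).sub (hfst.mul (hv0.mul hv0))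
  have hF2 := (hfst.mul (hpdx.mul hpdx)).add (hsnd.mul (hv0.mul hv0))
  have key1 : (fun q : ℝ × ℝ => -q.2 * (pdy v q) ^ 2 - q.1 * (v q) ^ 2)
      = fun q : ℝ × ℝ => -q.2 * (pdy v q * pdy v q) - q.1 * (v q * v q) := by
    funext q; ring
  have key2 : (fun q : ℝ × ℝ => q.1 * (pdx v q) ^ 2 + q.2 * (v q) ^ 2)
      = fun q : ℝ × ℝ => q.1 * (pdx v q * pdx v q) + q.2 * (v q * v q) := by
    funext q; ring
  rw [key1, key2]
  have e1 : pdx (fun q : ℝ × ℝ => -q.2 * (pdy v q * pdy v q) - q.1 * (v q * v q)) p = _ :=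
    congrFun (congrArg _ hF1.fderiv) ((1:ℝ),(0:ℝ))
  have e2 : pdy (fun q : ℝ × ℝ => q.1 * (pdx v q * pdx v q) + q.2 * (v q * v q)) p = _ :=
    congrFun (congrArg _ hF2.fderiv) ((0:ℝ),(1:ℝ))
  rw [e1, e2]
  simp only [ContinuousLinearMap.add_apply, ContinuousLinearMap.sub_apply,
    ContinuousLinearMap.smul_apply, ContinuousLinearMap.comp_apply,
    ContinuousLinearMap.neg_apply, ContinuousLinearMap.apply_apply,
    ContinuousLinearMap.coe_fst', ContinuousLinearMap.coe_snd', smul_eq_mul]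
  have hA : pdx v p = fderiv ℝ v p (1,0) := rfl
  have hB : pdy v p = fderiv ℝ v p (0,1) := rfl
  rw [← hA, ← hB] at *
  rw [hmixed, hmixed']
  simp only [Pi.neg_apply]
  ring
end

section
/- If u : ℝ × ℝ → ℝ is smooth and satisfies u_xy = u, then for all k, l ∈ ℕ the function J^k(∂x^l u) satisfies the linear relation (J^k ∂x^l u)_xy = J^k ∂x^l u, i.e., arbitrary compositions of the recursion operators ∂x and J map solutions of the light-cone Klein–Gordon equation to solutions. -/
section aux
variable {f g : ℝ × ℝ → ℝ}

lemma contDiff_pdx (hf : ContDiff ℝ (⊤ : ℕ∞) f) : ContDiff ℝ (⊤ : ℕ∞) (pdx f) :=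
  (hf.fderiv_right ((by simp))).clm_apply contDiff_const

lemma contDiff_pdy (hf : ContDiff ℝ (⊤ : ℕ∞) f) : ContDiff ℝ (⊤ : ℕ∞) (pdy f) :=
  (hf.fderiv_right ((by simp))).clm_apply contDiff_const

lemma contDiff_J (hf : ContDiff ℝ (⊤ : ℕ∞) f) : ContDiff ℝ (⊤ : ℕ∞) (J f) :=
  (contDiff_fst.mul (contDiff_pdx hf)).sub (contDiff_snd.mul (contDiff_pdy hf))

lemma pdv_eq (v : ℝ × ℝ) (hf : ContDiff ℝ (⊤ : ℕ∞) f) (p w : ℝ × ℝ) :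
    fderiv ℝ (fun q => fderiv ℝ f q v) p w = fderiv ℝ (fderiv ℝ f) p w v := by
  have hd : DifferentiableAt ℝ (fderiv ℝ f) p :=
    ((hf.fderiv_right (m := (⊤ : ℕ∞)) ((by simp))).differentiable (by simp)) p
  rw [fderiv_clm_apply hd (differentiableAt_const v)]
  simp

lemma pdx_pdy_comm (hf : ContDiff ℝ (⊤ : ℕ∞) f) (p : ℝ × ℝ) :
    pdx (pdy f) p = pdy (pdx f) p := by
  have hd : DifferentiableAt ℝ (fderiv ℝ f) p :=
    ((hf.fderiv_right (m := (⊤ : ℕ∞)) ((by simp))).differentiable (by simp)) p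
  have hsym := second_derivative_symmetric (f := f) (f' := fderiv ℝ f)
    (f'' := fderiv ℝ (fderiv ℝ f) p) (x := p)
    (fun y => ((hf.differentiable (by simp)) y).hasFDerivAt) hd.hasFDerivAt
  show fderiv ℝ (fun q => fderiv ℝ f q (0,1)) p (1,0)
      = fderiv ℝ (fun q => fderiv ℝ f q (1,0)) p (0,1)
  rw [pdv_eq _ hf, pdv_eq _ hf, hsym]

lemma pd_sub (v : ℝ × ℝ) {p : ℝ × ℝ} (ha : DifferentiableAt ℝ f p)
    (hb : DifferentiableAt ℝ g p) :
    fderiv ℝ (fun q => f q - g q) p v = fderiv ℝ f p v - fderiv ℝ g p v := by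
  rw [fderiv_fun_sub ha hb]; simp

lemma pd_mul (v : ℝ × ℝ) {p : ℝ × ℝ} (ha : DifferentiableAt ℝ f p)
    (hb : DifferentiableAt ℝ g p) :
    fderiv ℝ (fun q => f q * g q) p v = f p * fderiv ℝ g p v + g p * fderiv ℝ f p v := by
  rw [fderiv_fun_mul ha hb]; simp

lemma pd_fst (v : ℝ × ℝ) (p : ℝ × ℝ) :
    fderiv ℝ (fun q : ℝ × ℝ => q.1) p v = v.1 := by
  simp [fderiv_fst]

lemma pd_snd (v : ℝ × ℝ) (p : ℝ × ℝ) :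
    fderiv ℝ (fun q : ℝ × ℝ => q.2) p v = v.2 := by
  simp [fderiv_snd]

lemma sol_pdx (hf : ContDiff ℝ (⊤ : ℕ∞) f) (h : ∀ p, pdy (pdx f) p = f p) :
    ∀ p, pdy (pdx (pdx f)) p = pdx f p := by
  intro p
  rw [← pdx_pdy_comm (contDiff_pdx hf) p]
  have : pdy (pdx f) = f := funext h
  rw [this]

lemma sol_pdy_swap (hf : ContDiff ℝ (⊤ : ℕ∞) f) (h : ∀ p, pdy (pdx f) p = f p) :
    pdx (pdy f) = f := by
  funext p; rw [pdx_pdy_comm hf p, h p]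

lemma pd_J (v : ℝ × ℝ) (hf : ContDiff ℝ (⊤ : ℕ∞) f) (p : ℝ × ℝ) :
    fderiv ℝ (J f) p v =
      v.1 * pdx f p + p.1 * fderiv ℝ (pdx f) p v
        - (v.2 * pdy f p + p.2 * fderiv ℝ (pdy f) p v) := by
  have dx : DifferentiableAt ℝ (pdx f) p := (contDiff_pdx hf).differentiable (by simp) p
  have dy : DifferentiableAt ℝ (pdy f) p := (contDiff_pdy hf).differentiable (by simp) p
  have h1 : DifferentiableAt ℝ (fun q : ℝ × ℝ => q.1 * pdx f q) p :=
    differentiableAt_fst.mul dx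
  have h2 : DifferentiableAt ℝ (fun q : ℝ × ℝ => q.2 * pdy f q) p :=
    differentiableAt_snd.mul dy
  show fderiv ℝ (fun q => (fun q : ℝ × ℝ => q.1 * pdx f q) q
      - (fun q : ℝ × ℝ => q.2 * pdy f q) q) p v = _
  rw [pd_sub v h1 h2, pd_mul v differentiableAt_fst dx, pd_mul v differentiableAt_snd dy,
    pd_fst, pd_snd]
  ring

lemma pdx_J_eq (hf : ContDiff ℝ (⊤ : ℕ∞) f) :
    pdx (J f) = fun p => pdx f p + p.1 * pdx (pdx f) p - p.2 * pdx (pdy f) p := by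
  funext p
  show fderiv ℝ (J f) p (1, 0) = _
  rw [pd_J (1, 0) hf p]
  show 1 * pdx f p + p.1 * pdx (pdx f) p - ((0:ℝ) * pdy f p + p.2 * pdx (pdy f) p) = _
  ring

lemma sol_J (hf : ContDiff ℝ (⊤ : ℕ∞) f) (h : ∀ p, pdy (pdx f) p = f p) :
    ∀ p, pdy (pdx (J f)) p = J f p := by
  intro p
  rw [pdx_J_eq hf]
  have dxx : DifferentiableAt ℝ (pdx (pdx f)) p :=
    (contDiff_pdx (contDiff_pdx hf)).differentiable (by simp) p
  have dxy : DifferentiableAt ℝ (pdx (pdy f)) p :=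
    (contDiff_pdx (contDiff_pdy hf)).differentiable (by simp) p
  have dx : DifferentiableAt ℝ (pdx f) p := (contDiff_pdx hf).differentiable (by simp) p
  have h1 : DifferentiableAt ℝ (fun q : ℝ × ℝ => q.1 * pdx (pdx f) q) p :=
    differentiableAt_fst.mul dxx
  have h2 : DifferentiableAt ℝ (fun q : ℝ × ℝ => q.2 * pdx (pdy f) q) p :=
    differentiableAt_snd.mul dxy
  show fderiv ℝ (fun q => (pdx f q + q.1 * pdx (pdx f) q) - q.2 * pdx (pdy f) q) p (0,1) = _
  rw [pd_sub (f := fun q => pdx f q + q.1 * pdx (pdx f) q) (0,1) (dx.add h1) h2]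
  rw [fderiv_fun_add dx h1]
  have hmul1 := pd_mul (f := fun q : ℝ × ℝ => q.1) (g := pdx (pdx f)) (0,1)
    differentiableAt_fst dxx
  have hmul2 := pd_mul (f := fun q : ℝ × ℝ => q.2) (g := pdx (pdy f)) (0,1)
    differentiableAt_snd dxy
  simp only [ContinuousLinearMap.add_apply]
  rw [hmul1, hmul2, pd_fst, pd_snd]
  have e1 : fderiv ℝ (pdx f) p (0,1) = f p := h p
  have e2 : fderiv ℝ (pdx (pdx f)) p (0,1) = pdx f p := sol_pdx hf h p
  have e3 : pdx (pdy f) = f := sol_pdy_swap hf h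
  rw [e1, e2, e3]
  show f p + (p.1 * pdx f p + pdx (pdx f) p * 0) - (p.2 * pdy f p + f p * 1)
      = p.1 * pdx f p - p.2 * pdy f p
  ring

end aux

theorem stmt19 (u : ℝ × ℝ → ℝ) (hu : ContDiff ℝ (⊤ : ℕ∞) u)
    (heq : ∀ p, pdy (pdx u) p = u p) (k l : ℕ) :
    ∀ p : ℝ × ℝ, pdy (pdx (J^[k] (pdx^[l] u))) p = (J^[k] (pdx^[l] u)) p := by
  have hl : ∀ m : ℕ, ContDiff ℝ (⊤ : ℕ∞) (pdx^[m] u) ∧ ∀ p, pdy (pdx (pdx^[m] u)) p = pdx^[m] u p := by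
    intro m
    induction m with
    | zero => exact ⟨hu, heq⟩
    | succ n ih =>
      rw [Function.iterate_succ_apply']
      exact ⟨contDiff_pdx ih.1, sol_pdx ih.1 ih.2⟩
  have hk : ∀ m : ℕ, ContDiff ℝ (⊤ : ℕ∞) (J^[m] (pdx^[l] u)) ∧
      ∀ p, pdy (pdx (J^[m] (pdx^[l] u))) p = J^[m] (pdx^[l] u) p := by
    intro m
    induction m with
    | zero => exact hl l
    | succ n ih =>
      rw [Function.iterate_succ_apply']
      exact ⟨contDiff_J ih.1, sol_J ih.1 ih.2⟩
  exact (hk k).2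
end
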